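/- arXiv:2110.08770 — 3 statements merged into one kernel-verified Lean document; each statement's English description precedes it below -/
import Mathlib

section
/- Let L₁ ≥ 0, L₂ ≥ 0 and ε ≥ 0 be real constants, and let b : ℕ → ℝ be the quadratic recurrence defined by b(1) = ε and b(k+1) = b(k)·(L₁ + 1 + b(k)·L₂) for all k ≥ 1. Let f, g : ℝ → ℝ satisfy |f(x) − f(y)| ≤ L₁·|x − y| + L₂·|x − y|² for all x, y ∈ ℝ, and |g(x) − f(x)| ≤ ε for all x ∈ ℝ. Let x, x̂ : ℕ → ℝ satisfy x(k+1) = f(x(k)) and x̂(k+1) = g(x̂(k)) for all k ≥ 1, with |x̂(1) − x(1)| ≤ ε. Then |x̂(k) − x(k)| ≤ b(k) for all k ≥ 1; in particular (x̂(N) − x(N))² ≤ b(N)² for every horizon N ≥ 1. -/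
/-- Iterative-forecasting error propagation: if the ground-truth one-step map `f` is
second-order `(L₁, L₂)`-Lipschitz, the trained forecaster `g` deviates pointwise from
`f` by at most `ε`, and the forecast trajectory `xhat` is obtained by iterating `g`
starting within `ε` of the true trajectory `x` (which iterates `f`), then
`|xhat(k) − x(k)| ≤ b(k)` for all `k ≥ 1`, where `b` is the quadratic recurrence; in
particular `(xhat(N) − x(N))² ≤ b(N)²` for every horizon `N ≥ 1`. -/
theorem genf_iterative_forecasting_bound
    (L₁ L₂ ε : ℝ) (hL₁ : 0 ≤ L₁) (hL₂ : 0 ≤ L₂) (hε : 0 ≤ ε)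
    (b : ℕ → ℝ) (hb1 : b 1 = ε)
    (hbrec : ∀ k, 1 ≤ k → b (k + 1) = b k * (L₁ + 1 + b k * L₂))
    (f g : ℝ → ℝ)
    (hf : ∀ x y : ℝ, |f x - f y| ≤ L₁ * |x - y| + L₂ * |x - y| ^ 2)
    (hg : ∀ x : ℝ, |g x - f x| ≤ ε)
    (x xhat : ℕ → ℝ)
    (hx : ∀ k, 1 ≤ k → x (k + 1) = f (x k))
    (hxhat : ∀ k, 1 ≤ k → xhat (k + 1) = g (xhat k))
    (hinit : |xhat 1 - x 1| ≤ ε) :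
    (∀ k, 1 ≤ k → |xhat k - x k| ≤ b k) ∧
      (∀ N, 1 ≤ N → (xhat N - x N) ^ 2 ≤ b N ^ 2) := by
  have key : ∀ k, 1 ≤ k → ε ≤ b k ∧ |xhat k - x k| ≤ b k := by
    intro k hk
    induction k with
    | zero => omega
    | succ n ih =>
      rcases Nat.eq_or_lt_of_le hk with h1 | h1
      · constructor
        · rw [← h1, hb1]
        · rw [← h1]; exact hb1 ▸ hinit
      · have hn : 1 ≤ n := Nat.lt_succ_iff.mp h1
        obtain ⟨hεb, hd⟩ := ih hn
        have hb0 : 0 ≤ b n := le_trans hε hεb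
        rw [hxhat n hn, hx n hn, hbrec n hn]
        have h2 : |g (xhat n) - f (x n)| ≤ ε + (L₁ * |xhat n - x n| + L₂ * |xhat n - x n| ^ 2) := by
          calc |g (xhat n) - f (x n)|
              = |(g (xhat n) - f (xhat n)) + (f (xhat n) - f (x n))| := by ring_nf
            _ ≤ |g (xhat n) - f (xhat n)| + |f (xhat n) - f (x n)| := abs_add_le _ _
            _ ≤ ε + (L₁ * |xhat n - x n| + L₂ * |xhat n - x n| ^ 2) :=
                add_le_add (hg _) (hf _ _)
        have h3 : ε + (L₁ * |xhat n - x n| + L₂ * |xhat n - x n| ^ 2)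
            ≤ b n * (L₁ + 1 + b n * L₂) := by
          have habs0 : 0 ≤ |xhat n - x n| := abs_nonneg _
          have hsq : |xhat n - x n| ^ 2 ≤ b n ^ 2 := by
            apply pow_le_pow_left₀ habs0 hd
          nlinarith [mul_le_mul_of_nonneg_left hd hL₁, mul_le_mul_of_nonneg_left hsq hL₂]
        have hle := le_trans h2 h3
        refine ⟨?_, hle⟩
        nlinarith [mul_nonneg hb0 hL₁, mul_nonneg hb0 (mul_nonneg hb0 hL₂)]
  refine ⟨fun k hk => (key k hk).2, fun N hN => ?_⟩
  have h := (key N hN).2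
  have hb0 : 0 ≤ b N := le_trans hε (key N hN).1
  calc (xhat N - x N) ^ 2 = |xhat N - x N| ^ 2 := (sq_abs _).symm
    _ ≤ b N ^ 2 := pow_le_pow_left₀ (abs_nonneg _) h 2
end

section
/- Let L₁ ≥ 0, L₂ ≥ 0 and ε ≥ 0 be real constants, and let b : ℕ → ℝ be the quadratic recurrence defined by b(1) = ε and b(k+1) = b(k)·(L₁ + 1 + b(k)·L₂) for all k ≥ 1. Let f, g : ℝ → ℝ satisfy |f(x) − f(y)| ≤ L₁·|x − y| + L₂·|x − y|² for all x, y ∈ ℝ and |g(x) − f(x)| ≤ ε for all x ∈ ℝ, and let x, x̂ : ℕ → ℝ satisfy x(k+1) = f(x(k)), x̂(k+1) = g(x̂(k)) for all k ≥ 1 and |x̂(1) − x(1)| ≤ ε. Let m ≥ 1, c ≥ 0 and let F : (Fin m → ℝ) → ℝ satisfy |F(u) − F(v)| ≤ c·∑_{i} |u(i) − v(i)| for all u, v. Fix L ≥ 1, and let u, v : Fin m → ℝ and S ⊆ Fin m with |S| ≤ L be such that u(i) = v(i) for all i ∉ S, while for every i ∈ S there exists k(i) with 1 ≤ k(i) ≤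 L, u(i) = x̂(k(i)) and v(i) = x(k(i)). Then (F(u) − F(v))² ≤ (L·c)²·b(L)². -/
open Finset

/-- GenF synthetic-window term: combining the iterative error propagation bound with
the coordinate-perturbation bound, if the input window `u` of the direct forecaster
`F` contains at most `L` synthetic coordinates (values of the iteratively forecast
trajectory `xhat` at steps `≤ L`) while `v` contains the corresponding true values,
then `(F(u) − F(v))² ≤ (L·c)²·b(L)²`. -/
theorem genf_synthetic_window_bound
    (L₁ L₂ ε : ℝ) (hL₁ : 0 ≤ L₁) (hL₂ : 0 ≤ L₂) (hε : 0 ≤ ε)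
    (b : ℕ → ℝ) (hb1 : b 1 = ε)
    (hbrec : ∀ k, 1 ≤ k → b (k + 1) = b k * (L₁ + 1 + b k * L₂))
    (f g : ℝ → ℝ)
    (hf : ∀ x y : ℝ, |f x - f y| ≤ L₁ * |x - y| + L₂ * |x - y| ^ 2)
    (hg : ∀ x : ℝ, |g x - f x| ≤ ε)
    (x xhat : ℕ → ℝ)
    (hx : ∀ k, 1 ≤ k → x (k + 1) = f (x k))
    (hxhat : ∀ k, 1 ≤ k → xhat (k + 1) = g (xhat k))
    (hinit : |xhat 1 - x 1| ≤ ε)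
    (m : ℕ) (hm : 1 ≤ m) (c : ℝ) (hc : 0 ≤ c)
    (F : (Fin m → ℝ) → ℝ)
    (hF : ∀ u v : Fin m → ℝ, |F u - F v| ≤ c * ∑ i, |u i - v i|)
    (L : ℕ) (hL : 1 ≤ L)
    (u v : Fin m → ℝ) (S : Finset (Fin m)) (hS : S.card ≤ L)
    (hagree : ∀ i ∉ S, u i = v i)
    (hsynth : ∀ i ∈ S, ∃ k : ℕ, 1 ≤ k ∧ k ≤ L ∧ u i = xhat k ∧ v i = x k) :
    (F u - F v) ^ 2 ≤ ((L : ℝ) * c) ^ 2 * b L ^ 2 := by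
  have key : ∀ k, 1 ≤ k → ε ≤ b k ∧ |xhat k - x k| ≤ b k := by
    intro k hk
    induction k with
    | zero => omega
    | succ n ih =>
      rcases Nat.lt_or_ge n 1 with h | hn
      · have h1 : n + 1 = 1 := by omega
        rw [h1, hb1]
        exact ⟨le_refl _, hinit⟩
      · obtain ⟨hεb, herr⟩ := ih hn
        have hb0 : 0 ≤ b n := le_trans hε hεb
        have hrec := hbrec n hn
        constructor
        · calc ε ≤ b n := hεb
            _ ≤ b n * (L₁ + 1 + b n * L₂) := by
                nlinarith [mul_nonneg hb0 hL₁, mul_nonneg (mul_nonneg hb0 hb0) hL₂]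
            _ = b (n + 1) := hrec.symm
        · have h1 : |xhat (n + 1) - x (n + 1)| = |g (xhat n) - f (x n)| := by
            rw [hxhat n hn, hx n hn]
          rw [h1]
          have h2 : |g (xhat n) - f (x n)| ≤
              |g (xhat n) - f (xhat n)| + |f (xhat n) - f (x n)| := by
            have := abs_add_le (g (xhat n) - f (xhat n)) (f (xhat n) - f (x n))
            simpa using this
          have h3 := hg (xhat n)
          have h4 := hf (xhat n) (x n)
          have habs : 0 ≤ |xhat n - x n| := abs_nonneg _
          rw [hrec]
          nlinarith [mul_le_mul_of_nonneg_left herr hL₁,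
            mul_le_mul_of_nonneg_left (pow_le_pow_left₀ habs herr 2) hL₂]
  have step : ∀ j, 1 ≤ j → b j ≤ b (j + 1) := by
    intro j hj
    have hεb := (key j hj).1
    have hb0 : 0 ≤ b j := le_trans hε hεb
    rw [hbrec j hj]
    nlinarith [mul_nonneg hb0 hL₁, mul_nonneg (mul_nonneg hb0 hb0) hL₂]
  have mono' : ∀ k, 1 ≤ k → ∀ d, b k ≤ b (k + d) := by
    intro k hk d
    induction d with
    | zero => simp
    | succ d ihd =>
      calc b k ≤ b (k + d) := ihd
        _ ≤ b (k + d + 1) := step _ (by omega)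
        _ = b (k + (d + 1)) := by ring_nf
  have mono : ∀ k, 1 ≤ k → k ≤ L → b k ≤ b L := by
    intro k hk hkL
    obtain ⟨d, rfl⟩ := Nat.exists_eq_add_of_le hkL
    exact mono' k hk d
  have hbL0 : 0 ≤ b L := le_trans hε (key L hL).1
  have hsum : ∑ i, |u i - v i| ≤ (L : ℝ) * b L := by
    have hsub : ∑ i, |u i - v i| = ∑ i ∈ S, |u i - v i| :=
      (Finset.sum_subset (Finset.subset_univ S)
        (fun i _ hi => by rw [hagree i hi]; simp)).symm
    rw [hsub]
    calc ∑ i ∈ S, |u i - v i| ≤ ∑ _i ∈ S, b L := by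
          apply Finset.sum_le_sum
          intro i hi
          obtain ⟨k, hk1, hkL, hu, hv⟩ := hsynth i hi
          rw [hu, hv]
          exact le_trans (key k hk1).2 (mono k hk1 hkL)
      _ = (S.card : ℝ) * b L := by rw [Finset.sum_const, nsmul_eq_mul]
      _ ≤ (L : ℝ) * b L := by
          apply mul_le_mul_of_nonneg_right _ hbL0
          exact_mod_cast hS
  have hFb : |F u - F v| ≤ (L : ℝ) * c * b L := by
    calc |F u - F v| ≤ c * ∑ i, |u i - v i| := hF u v
      _ ≤ c * ((L : ℝ) * b L) := mul_le_mul_of_nonneg_left hsum hc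
      _ = (L : ℝ) * c * b L := by ring
  have h0 : 0 ≤ |F u - F v| := abs_nonneg _
  calc (F u - F v) ^ 2 = |F u - F v| ^ 2 := (sq_abs _).symm
    _ ≤ ((L : ℝ) * c * b L) ^ 2 := by nlinarith
    _ = ((L : ℝ) * c) ^ 2 * b L ^ 2 := by ring
end

section
/- Let L₁ ≥ 0, L₂ ≥ 0 and ε ≥ 0 be real constants, and let b : ℕ → ℝ be the quadratic recurrence defined by b(1) = ε and b(k+1) = b(k)·(L₁ + 1 + b(k)·L₂) for all k ≥ 1. Let N ≥ 2 be an integer and β₀ ≥ 0, β₁ ≥ 0, β₂ ≥ 0, σ_D ≥ 0 real constants; define U_dir = (N−1)·β₁ + σ_D²·β₂, U_iter = b(N)², and, for integers 0 < L < N, U_GenF(L) = β₀·b(L)² + (N−L−1)·β₁ + σ_D²·β₂. If b(1) > 0, b(N−1) > 0, and β₀ < min{ β₁ / b(1)², (b(N)² − σ_D²·β₂) / b(N−1)² }, then there exists an integer L with 0 < L < N such that U_GenF(L) < U_iter and U_GenF(L) < U_dir. -/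
/-- Corollary 1 of GenF: under the smallness condition
`β₀ < min { β₁ / b(1)², (b(N)² − σ_D²·β₂) / b(N−1)² }`, there exists a synthetic
window length `0 < L < N` such that the GenF upper bound
`U_GenF(L) = β₀·b(L)² + (N−L−1)·β₁ + σ_D²·β₂` is strictly smaller than both the
iterative upper bound `U_iter = b(N)²` and the direct upper bound
`U_dir = (N−1)·β₁ + σ_D²·β₂`. -/
theorem genf_corollary_main
    (L₁ L₂ ε : ℝ) (hL₁ : 0 ≤ L₁) (hL₂ : 0 ≤ L₂) (hε : 0 ≤ ε)
    (b : ℕ → ℝ) (hb1 : b 1 = ε)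
    (hbrec : ∀ k, 1 ≤ k → b (k + 1) = b k * (L₁ + 1 + b k * L₂))
    (N : ℕ) (hN : 2 ≤ N)
    (β₀ β₁ β₂ σD : ℝ) (hβ₀ : 0 ≤ β₀) (hβ₁ : 0 ≤ β₁) (hβ₂ : 0 ≤ β₂) (hσD : 0 ≤ σD)
    (hb1pos : 0 < b 1) (hbN1pos : 0 < b (N - 1))
    (hcond : β₀ < min (β₁ / b 1 ^ 2) ((b N ^ 2 - σD ^ 2 * β₂) / b (N - 1) ^ 2)) :
    ∃ L : ℕ, 0 < L ∧ L < N ∧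
      (β₀ * b L ^ 2 + ((N : ℝ) - (L : ℝ) - 1) * β₁ + σD ^ 2 * β₂ < b N ^ 2) ∧
      (β₀ * b L ^ 2 + ((N : ℝ) - (L : ℝ) - 1) * β₁ + σD ^ 2 * β₂
        < ((N : ℝ) - 1) * β₁ + σD ^ 2 * β₂) := by
  have h1 : β₀ * b 1 ^ 2 < β₁ := by
    have := (lt_min_iff.mp hcond).1
    have hb2 : 0 < b 1 ^ 2 := pow_pos hb1pos 2
    calc β₀ * b 1 ^ 2 < (β₁ / b 1 ^ 2) * b 1 ^ 2 := by
          exact mul_lt_mul_of_pos_right this hb2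
      _ = β₁ := div_mul_cancel₀ _ (ne_of_gt hb2)
  have h2 : β₀ * b (N - 1) ^ 2 < b N ^ 2 - σD ^ 2 * β₂ := by
    have := (lt_min_iff.mp hcond).2
    have hb2 : 0 < b (N - 1) ^ 2 := pow_pos hbN1pos 2
    calc β₀ * b (N - 1) ^ 2 < ((b N ^ 2 - σD ^ 2 * β₂) / b (N - 1) ^ 2) * b (N - 1) ^ 2 :=
          mul_lt_mul_of_pos_right this hb2
      _ = _ := div_mul_cancel₀ _ (ne_of_gt hb2)
  by_cases hcase : ((N : ℝ) - 1) * β₁ + σD ^ 2 * β₂ ≤ b N ^ 2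
  · refine ⟨1, one_pos, by omega, ?_, ?_⟩
    · push_cast
      calc β₀ * b 1 ^ 2 + ((N : ℝ) - 1 - 1) * β₁ + σD ^ 2 * β₂
          < β₁ + ((N : ℝ) - 1 - 1) * β₁ + σD ^ 2 * β₂ := by linarith
        _ = ((N : ℝ) - 1) * β₁ + σD ^ 2 * β₂ := by ring
        _ ≤ b N ^ 2 := hcase
    · push_cast
      nlinarith
  · have hcast : ((N - 1 : ℕ) : ℝ) = (N : ℝ) - 1 := by
      have h : (1:ℕ) ≤ N := by omega
      push_cast [h]; ring
    have hiter : b N ^ 2 < ((N : ℝ) - 1) * β₁ + σD ^ 2 * β₂ := lt_of_not_ge hcase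
    refine ⟨N - 1, by omega, by omega, ?_, ?_⟩ <;> rw [hcast]
    · nlinarith
    · nlinarith
end
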